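/- Let X = F[ℓ,m,p] be a rotational word with 1 ≤ ℓ ≤ p-1, and let A_L, A_R be n×n real matrices differing only in their first columns, b ∈ ℝⁿ, with d the multiplicative inverse of m mod p. Let X̄⁰ be X with symbol 0 flipped. Assume det(I - M_X) ≠ 0 and det(I - M_{X̄⁰}) ≠ 0, and let {y^{(i)}} and {z^{(i)}} be the corresponding X-cycle and X̄⁰-cycle. If ρᵀb ≠ 0, y^{((ℓ-1)d mod p)}₁ < 0, and z^{(ℓd mod p)}₁ > 0, then det(I - M_X) and det(I - M_{X̄⁰}) have opposite signs. -/
import Mathlib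


open Matrix

/-- `M_W = A_{W_{p-1}} ⋯ A_{W_1} A_{W_0}` for a `p`-periodic word `W : ℕ → Bool`
(`true` = `L`, `false` = `R`). -/
def Mword {n : ℕ} (p : ℕ) (A : Bool → Matrix (Fin n) (Fin n) ℝ) (W : ℕ → Bool) :
    Matrix (Fin n) (Fin n) ℝ :=
  ((List.ofFn fun i : Fin p => A (W i.val)).reverse).prod

open Matrix

section Aux
variable {n : ℕ} (A : Bool → Matrix (Fin n) (Fin n) ℝ) (W : ℕ → Bool) (b : Fin n → ℝ)

def Mm (s : ℕ) : ℕ → Matrix (Fin n) (Fin n) ℝ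
  | 0 => 1
  | q+1 => A (W (s+q)) * Mm s q

def Pp (s : ℕ) : ℕ → Matrix (Fin n) (Fin n) ℝ
  | 0 => 0
  | q+1 => A (W (s+q)) * Pp s q + 1

lemma Mm_add (s a : ℕ) : ∀ q, Mm A W s (a + q) = Mm A W (s+a) q * Mm A W s a
  | 0 => by simp [Mm]
  | q+1 => by
    show Mm A W s ((a+q)+1) = _
    rw [Mm, Mm, Mm_add s a q, Matrix.mul_assoc,
      show s + (a + q) = s + a + q from by omega]

lemma Mm_period (p : ℕ) (hW : ∀ i, W (i + p) = W i) (t : ℕ) :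
    ∀ q, Mm A W (t + p) q = Mm A W t q
  | 0 => rfl
  | q+1 => by
    rw [Mm, Mm, Mm_period p hW t q,
      show t + p + q = t + q + p from by omega, hW (t+q)]

lemma Mm_shift (t s : ℕ) : ∀ q, Mm A W (s + t) q = Mm A (fun k => W (k + t)) s q
  | 0 => rfl
  | q+1 => by
    rw [Mm, Mm, Mm_shift t s q, show s + t + q = (s + q) + t from by omega]

lemma Mword_eq_Mm (p : ℕ) : ∀ (W : ℕ → Bool), Mword p A W = Mm A W 0 p := by
  induction p with
  | zero => intro W; simp [Mword, Mm]
  | succ p ih =>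
    intro W
    have h1 : Mword (p+1) A W = Mword p A (fun k => W (k + 1)) * A (W 0) := by
      simp [Mword, List.ofFn_succ, Function.comp]
    have h2 : Mm A W 0 (p+1) = Mm A W 1 p * Mm A W 0 1 := by
      rw [show p + 1 = 1 + p from by omega, Mm_add]
    rw [h1, h2, ih, show Mm A W 1 p = Mm A (fun k => W (k+1)) 0 p from Mm_shift A W 1 0 p]
    simp [Mm]

lemma orbit (y : ℕ → Fin n → ℝ) (hy : ∀ i, A (W i) *ᵥ y i + b = y (i + 1)) (s : ℕ) :
    ∀ q, y (s + q) = Mm A W s q *ᵥ y s + Pp A W s q *ᵥ b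
  | 0 => by simp [Mm, Pp]
  | q+1 => by
    rw [show s + (q+1) = (s+q) + 1 from rfl, ← hy (s+q), orbit y hy s q, Mm, Pp]
    simp [Matrix.mulVec_add, Matrix.add_mulVec, ← Matrix.mulVec_mulVec]
    try abel

lemma Pp_congr (W' : ℕ → Bool) (s s' : ℕ) :
    ∀ q, (∀ k, 0 < k → k < q → W (s + k) = W' (s' + k)) → Pp A W s q = Pp A W' s' q
  | 0, _ => rfl
  | q+1, h => by
    rcases Nat.eq_zero_or_pos q with hq | hq
    · subst hq; simp [Pp]
    · rw [Pp, Pp, h q hq (by omega), Pp_congr W' s s' q (fun k h1 h2 => h k h1 (by omega))]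
end Aux

section Aux2
variable {n : ℕ} (A : Bool → Matrix (Fin n) (Fin n) ℝ) (W : ℕ → Bool) (b : Fin n → ℝ)

lemma offcol [NeZero n] (hcol : ∀ i j, j ≠ 0 → A true i j = A false i j) (s : ℕ) :
    ∀ q, ∀ i j, j ≠ (0 : Fin n) →
      ((1 - Mm A W s q) - Pp A W s q * (1 - A true)) i j = 0
  | 0 => by intro i j hj; simp [Mm, Pp]
  | q+1 => by
    intro i j hj
    have hid : (1 - Mm A W s (q+1)) - Pp A W s (q+1) * (1 - A true)
        = (A true - A (W (s+q)))
          + A (W (s+q)) * ((1 - Mm A W s q) - Pp A W s q * (1 - A true)) := by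
      rw [Mm, Pp]; noncomm_ring
    rw [hid, Matrix.add_apply, Matrix.mul_apply]
    have h1 : (A true - A (W (s+q))) i j = 0 := by
      rw [Matrix.sub_apply]
      cases hW : W (s+q)
      · rw [hcol i j hj]; ring
      · ring
    rw [h1, Finset.sum_eq_zero, add_zero]
    intro k _
    rw [offcol hcol s q k j hj, mul_zero]

lemma key [NeZero n] (hcol : ∀ i j, j ≠ 0 → A true i j = A false i j)
    (p s : ℕ) (y : ℕ → Fin n → ℝ)
    (hy : ∀ i, A (W i) *ᵥ y i + b = y (i + 1)) (hper : y (s + p) = y s) :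
    (1 - Mm A W s p).det * y s 0
      = (Pp A W s p).det * ((1 - A true).adjugate 0 ⬝ᵥ b) := by
  set M := 1 - Mm A W s p with hM
  set P := Pp A W s p with hP
  have hfix : M *ᵥ y s = P *ᵥ b := by
    have h := orbit A W b y hy s p
    rw [hper] at h
    rw [hM, Matrix.sub_mulVec, Matrix.one_mulVec, sub_eq_iff_eq_add, add_comm]
    exact h
  have hdet : M.det • y s = M.adjugate *ᵥ (P *ᵥ b) := by
    rw [← hfix, Matrix.mulVec_mulVec, Matrix.adjugate_mul, Matrix.smul_mulVec,
      Matrix.one_mulVec]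
  have h0 : M.det * y s 0 = Matrix.cramer M (P *ᵥ b) 0 := by
    rw [Matrix.cramer_eq_adjugate_mulVec, ← hdet]
    simp
  rw [h0, Matrix.cramer_apply]
  have hup : M.updateCol 0 (P *ᵥ b) = P * ((1 - A true).updateCol 0 b) := by
    ext i j
    by_cases hj : j = 0
    · subst hj
      simp [Matrix.updateCol_apply, Matrix.mul_apply, Matrix.mulVec, dotProduct]
    · rw [Matrix.updateCol_ne hj, Matrix.mul_apply]
      have hcong : ∀ k, ((1 - A true).updateCol 0 b) k j = (1 - A true) k j :=
        fun k => Matrix.updateCol_ne hj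
      simp_rw [hcong]
      rw [← Matrix.mul_apply]
      have hoc := offcol A W hcol s p i j hj
      rw [Matrix.sub_apply] at hoc
      rw [hM]
      linarith [hoc]
  rw [hup, Matrix.det_mul]
  congr 1
  rw [show ((1 - A true).updateCol 0 b).det = Matrix.cramer (1 - A true) b 0 from
    (Matrix.cramer_apply _ _ _).symm, Matrix.cramer_eq_adjugate_mulVec]
  rfl

lemma det_shift (p : ℕ) (hW : ∀ i, W (i + p) = W i) (s : ℕ) (hs : s < p) :
    (1 - Mm A W s p).det = (1 - Mm A W 0 p).det := by
  have h1 : Mm A W s p = Mm A W 0 s * Mm A W s (p - s) := by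
    have h := Mm_add A W s (p - s) s
    rw [show (p - s) + s = p from by omega, show s + (p - s) = 0 + p from by omega] at h
    rw [h, Mm_period A W p hW 0 s]
  have h2 : Mm A W 0 p = Mm A W s (p - s) * Mm A W 0 s := by
    have h := Mm_add A W 0 s (p - s)
    rw [show s + (p - s) = p from by omega, show 0 + s = s from by omega] at h
    exact h
  rw [h1, h2, Matrix.det_one_sub_mul_comm]
end Aux2

/-- The core computation of the nonsmooth-fold theorem: let `X = F[ℓ,m,p]` be a
rotational word (as a `p`-periodic function `ℕ → Bool`, `X_i = L` iff
`i·m mod p < ℓ`) and `X̄⁰` the word with the symbol at index `0` flipped.  If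
both `det(I - M_X)` and `det(I - M_{X̄⁰})` are nonzero, `ρᵀ b ≠ 0`, and the
corresponding cycles satisfy `y^{((ℓ-1)d mod p)}₁ < 0` and
`z^{(ℓ d mod p)}₁ > 0`, then `det(I - M_X)` and `det(I - M_{X̄⁰})` have
opposite signs. -/
theorem dets_have_opposite_signs (n : ℕ) [NeZero n]
    (A : Bool → Matrix (Fin n) (Fin n) ℝ) (b : Fin n → ℝ)
    (hcol : ∀ i j, j ≠ 0 → A true i j = A false i j)
    (ℓ m p : ℕ) (hℓ1 : 1 ≤ ℓ) (hℓp : ℓ ≤ p - 1) (hm0 : 0 < m) (hmp : m < p)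
    (hcop : Nat.gcd m p = 1)
    (d : ℕ) (hd1 : 1 ≤ d) (hdp : d ≤ p - 1) (hd : m * d % p = 1)
    (X Xb : ℕ → Bool)
    (hX : ∀ i, X i = decide (i * m % p < ℓ))
    (hXb : ∀ i, Xb i = if i % p = 0 then !(X i) else X i)
    (hdetX : (1 - Mword p A X).det ≠ 0)
    (hdetXb : (1 - Mword p A Xb).det ≠ 0)
    (ρ : Fin n → ℝ) (hρL : ρ = (1 - A true).adjugate 0)
    (hρR : ρ = (1 - A false).adjugate 0)
    (hρb : ρ ⬝ᵥ b ≠ 0)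
    (y z : ℕ → Fin n → ℝ)
    (hy : ∀ i, A (X i) *ᵥ y i + b = y (i + 1))
    (hyper : ∀ i, y (i + p) = y i)
    (hz : ∀ i, A (Xb i) *ᵥ z i + b = z (i + 1))
    (hzper : ∀ i, z (i + p) = z i)
    (hyneg : y ((ℓ - 1) * d % p) 0 < 0)
    (hzpos : z (ℓ * d % p) 0 > 0) :
    (1 - Mword p A X).det * (1 - Mword p A Xb).det < 0 := by
  have hp0 : 0 < p := by omega
  have hℓ' : ℓ < p := by omega
  set s1 := (ℓ - 1) * d % p with hs1
  set s2 := ℓ * d % p with hs2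
  have hs1p : s1 < p := Nat.mod_lt _ hp0
  have hs2p : s2 < p := Nat.mod_lt _ hp0
  have hmd : m * d ≡ 1 [MOD p] := by
    unfold Nat.ModEq
    rw [hd, Nat.mod_eq_of_lt (by omega)]
  -- periodicity of the words
  have hXper : ∀ i, X (i + p) = X i := by
    intro i
    rw [hX, hX, Nat.add_mul, Nat.add_mul_mod_self_left]
  have hXbper : ∀ i, Xb (i + p) = Xb i := by
    intro i
    rw [hXb, hXb, Nat.add_mod_right, hXper]
  -- agreement of the shifted words away from index 0
  have hagree : ∀ k, 0 < k → k < p → X (s1 + k) = Xb (s2 + k) := by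
    intro k hk0 hkp
    have e1 : (s1 + k) * m % p = (ℓ - 1 + k * m) % p := by
      show (s1 + k) * m ≡ ℓ - 1 + k * m [MOD p]
      calc (s1 + k) * m = s1 * m + k * m := by ring
        _ ≡ ((ℓ - 1) * d) * m + k * m [MOD p] :=
            Nat.ModEq.add_right _ (Nat.ModEq.mul_right m (Nat.mod_modEq _ p))
        _ = (ℓ - 1) * (m * d) + k * m := by ring
        _ ≡ (ℓ - 1) * 1 + k * m [MOD p] :=
            Nat.ModEq.add_right _ (Nat.ModEq.mul_left _ hmd)
        _ = ℓ - 1 + k * m := by ring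
    have e2 : (s2 + k) * m % p = (ℓ + k * m) % p := by
      show (s2 + k) * m ≡ ℓ + k * m [MOD p]
      calc (s2 + k) * m = s2 * m + k * m := by ring
        _ ≡ (ℓ * d) * m + k * m [MOD p] :=
            Nat.ModEq.add_right _ (Nat.ModEq.mul_right m (Nat.mod_modEq _ p))
        _ = ℓ * (m * d) + k * m := by ring
        _ ≡ ℓ * 1 + k * m [MOD p] :=
            Nat.ModEq.add_right _ (Nat.ModEq.mul_left _ hmd)
        _ = ℓ + k * m := by ring
    set u := (ℓ + k * m) % p with hu
    have hup : u < p := Nat.mod_lt _ hp0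
    have hkm : k * m % p ≠ 0 := by
      intro h
      have hdvd : p ∣ k * m := Nat.dvd_of_mod_eq_zero h
      have hpk : p ∣ k :=
        Nat.Coprime.dvd_of_dvd_mul_right (Nat.coprime_comm.mp hcop) hdvd
      have := Nat.le_of_dvd hk0 hpk
      omega
    have huℓ : u ≠ ℓ := by
      intro h
      apply hkm
      set r := k * m % p with hr
      have hrp : r < p := Nat.mod_lt _ hp0
      have hur : (ℓ + r) % p = ℓ := by
        rw [hr, Nat.add_mod ℓ (k * m % p) p, Nat.mod_mod_of_dvd (k * m) dvd_rfl,
          ← Nat.add_mod]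
        rw [hu] at h
        exact h
      rcases lt_or_ge (ℓ + r) p with hlt | hge
      · rw [Nat.mod_eq_of_lt hlt] at hur; omega
      · rw [Nat.mod_eq_sub_mod hge, Nat.mod_eq_of_lt (by omega)] at hur; omega
    have hdvd_iff : (s2 + k) % p = 0 ↔ u = 0 := by
      constructor
      · intro h
        have h1 : p ∣ (s2 + k) := Nat.dvd_of_mod_eq_zero h
        have h2 : p ∣ (s2 + k) * m := h1.mul_right m
        rw [← e2]
        exact Nat.mod_eq_zero_of_dvd h2
      · intro h
        have h1 : p ∣ ℓ + k * m := by
          apply Nat.dvd_of_mod_eq_zero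
          rw [hu] at h; exact h
        have h2 : p ∣ (ℓ + k * m) * d := h1.mul_right d
        have hcong : (ℓ + k * m) * d ≡ s2 + k [MOD p] := by
          calc (ℓ + k * m) * d = ℓ * d + k * (m * d) := by ring
            _ ≡ ℓ * d + k * 1 [MOD p] := Nat.ModEq.add_left _ (Nat.ModEq.mul_left k hmd)
            _ = ℓ * d + k := by ring
            _ ≡ s2 + k [MOD p] := Nat.ModEq.add_right k (Nat.mod_modEq (ℓ * d) p).symm
        rw [← hcong]
        exact Nat.mod_eq_zero_of_dvd h2
    rw [hX, hXb, hX, e1, e2]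
    by_cases hu0 : u = 0
    · rw [if_pos (hdvd_iff.mpr hu0), hu0]
      have hv : (ℓ - 1 + k * m) % p = p - 1 := by
        have h1 : p ∣ ℓ + k * m := by
          apply Nat.dvd_of_mod_eq_zero; rw [hu] at hu0; exact hu0
        obtain ⟨q, hq⟩ := h1
        rcases q with _ | q'
        · omega
        · have h2 : ℓ - 1 + k * m = p * q' + (p - 1) := by
            have : p * (q' + 1) = p * q' + p := by ring
            omega
          rw [h2, Nat.mul_add_mod, Nat.mod_eq_of_lt (by omega)]
      rw [hv]
      have h3 : ¬ (p - 1 < ℓ) := by omega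
      have h4 : 0 < ℓ := hℓ1
      simp [h3, h4]
    · rw [if_neg (fun h => hu0 (hdvd_iff.mp h))]
      have hv : (ℓ - 1 + k * m) % p = u - 1 := by
        have hdm := Nat.div_add_mod (ℓ + k * m) p
        rw [← hu] at hdm
        have h1 : ℓ - 1 + k * m = p * ((ℓ + k * m) / p) + (u - 1) := by omega
        rw [h1, Nat.mul_add_mod, Nat.mod_eq_of_lt (by omega)]
      rw [hv]
      exact decide_eq_decide.mpr (by omega)
  -- relate the dets to the shifted products
  have hDX : (1 - Mword p A X).det = (1 - Mm A X s1 p).det := by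
    rw [Mword_eq_Mm, ← det_shift A X p hXper s1 hs1p]
  have hDXb : (1 - Mword p A Xb).det = (1 - Mm A Xb s2 p).det := by
    rw [Mword_eq_Mm, ← det_shift A Xb p hXbper s2 hs2p]
  -- key identities
  have hk1 := key A X b hcol p s1 y hy (hyper s1)
  have hk2 := key A Xb b hcol p s2 z hz (hzper s2)
  rw [← hρL] at hk1 hk2
  have hPP : Pp A X s1 p = Pp A Xb s2 p :=
    Pp_congr A X Xb s1 s2 p (fun k h1 h2 => hagree k h1 h2)
  rw [hPP] at hk1
  set N := (Pp A Xb s2 p).det * (ρ ⬝ᵥ b) with hN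
  set D1 := (1 - Mm A X s1 p).det with hD1
  set D2 := (1 - Mm A Xb s2 p).det with hD2
  rw [hDX, hDXb]
  rw [hDX] at hdetX
  have hNne : N ≠ 0 := by
    rw [← hk1]
    exact mul_ne_zero hdetX (ne_of_lt hyneg)
  have hN2 : 0 < N * N := mul_self_pos.mpr hNne
  have h12 : (D1 * y s1 0) * (D2 * z s2 0) = N * N := by rw [hk1, hk2]
  have hprod : (D1 * D2) * (y s1 0 * z s2 0) = N * N := by rw [← h12]; ring
  have hyz : y s1 0 * z s2 0 < 0 := mul_neg_of_neg_of_pos hyneg hzpos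
  by_contra hcon
  push_neg at hcon
  have : (D1 * D2) * (y s1 0 * z s2 0) ≤ 0 :=
    mul_nonpos_of_nonneg_of_nonpos hcon hyz.le
  linarith
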